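/- Let A : M → ℂ^L be a linear map on an inner-product space M and let T ⊆ M be a subspace such that (1−δ)‖X‖² ≤ ‖A(X)‖² ≤ (1+δ)‖X‖² for all X ∈ T, with 0 ≤ δ < 1. Then ‖P_T − P_T ∘ A* ∘ A ∘ P_T‖ ≤ δ, where P_T is the orthogonal projection onto T and the norm is the operator norm on M. -/

import Mathlib

/-!
`B = P_T - P_T A† A P_T` is self-adjoint, and its quadratic form is
`re ⟪B x, x⟫ = ‖P_T x‖² - ‖A (P_T x)‖²`, which the local isometry property bounds by
`δ ‖P_T x‖² ≤ δ ‖x‖²`. For a self-adjoint operator the norm is the supremum of the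
Rayleigh quotient, so `‖B‖ ≤ δ`.
-/

open ContinuousLinearMap RCLike

theorem LinearMap.IsSymmetric.opNorm_le_of_abs_re_inner_le {𝕜 E : Type*} [RCLike 𝕜]
    [NormedAddCommGroup E] [InnerProductSpace 𝕜 E] {S : E →L[𝕜] E}
    (hS : (S : E →ₗ[𝕜] E).IsSymmetric) {C : ℝ} (hC : 0 ≤ C)
    (h : ∀ x, |re (inner 𝕜 (S x) x)| ≤ C * ‖x‖ ^ 2) : ‖S‖ ≤ C := by
  rw [S.norm_eq_iSup_rayleighQuotient hS]
  refine ciSup_le fun x => ?_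
  rcases eq_or_ne x 0 with rfl | hx
  · simpa using hC
  rw [rayleighQuotient, reApplyInnerSelf_apply, abs_div, abs_sq, div_le_iff₀ (by positivity)]
  exact h x

namespace Submodule

variable {𝕜 E F : Type*} [RCLike 𝕜] [NormedAddCommGroup E] [InnerProductSpace 𝕜 E]
  [CompleteSpace E] [NormedAddCommGroup F] [InnerProductSpace 𝕜 F] [CompleteSpace F]
  (K : Submodule 𝕜 E) [K.HasOrthogonalProjection] (A : E →L[𝕜] F)

/-- Vanishes iff `A` is isometric on `K`. -/
noncomputable def isometryDefect : E →L[𝕜] E :=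
  K.starProjection - K.starProjection ∘L (adjoint A ∘L (A ∘L K.starProjection))

theorem inner_isometryDefect_apply (x y : E) :
    inner 𝕜 (K.isometryDefect A x) y
      = inner 𝕜 (K.starProjection x) (K.starProjection y)
        - inner 𝕜 (A (K.starProjection x)) (A (K.starProjection y)) := by
  have hP : K.starProjection (K.starProjection x) = K.starProjection x :=
    K.starProjection_eq_self_iff.mpr (K.starProjection_apply_mem x)
  rw [isometryDefect, sub_apply, comp_apply, comp_apply, comp_apply, inner_sub_left]
  congr 1
  · simpa only [hP] using K.inner_starProjection_left_eq_right (K.starProjection x) y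
  · rw [inner_starProjection_left_eq_right, adjoint_inner_left]

theorem isSymmetric_isometryDefect : (K.isometryDefect A : E →ₗ[𝕜] E).IsSymmetric := by
  intro x y
  simp only [coe_coe]
  rw [← inner_conj_symm x, inner_isometryDefect_apply,
    inner_isometryDefect_apply, map_sub, inner_conj_symm, inner_conj_symm]

theorem re_inner_isometryDefect_apply_self (x : E) :
    re (inner 𝕜 (K.isometryDefect A x) x)
      = ‖K.starProjection x‖ ^ 2 - ‖A (K.starProjection x)‖ ^ 2 := by
  rw [inner_isometryDefect_apply, map_sub, inner_self_eq_norm_sq, inner_self_eq_norm_sq]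

end Submodule

theorem local_isometry_operator_bound_general
    {M F : Type*} [NormedAddCommGroup M] [InnerProductSpace ℂ M] [FiniteDimensional ℂ M]
    [NormedAddCommGroup F] [InnerProductSpace ℂ F] [FiniteDimensional ℂ F]
    (A : M →L[ℂ] F) (T : Submodule ℂ M) (δ : ℝ) (hδ0 : 0 ≤ δ)
    (hiso : ∀ X ∈ T, (1 - δ) * ‖X‖ ^ 2 ≤ ‖A X‖ ^ 2 ∧ ‖A X‖ ^ 2 ≤ (1 + δ) * ‖X‖ ^ 2) :
    ‖(T.subtypeL.comp (T.orthogonalProjection)) -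
        ((T.subtypeL.comp (T.orthogonalProjection)).comp
          ((ContinuousLinearMap.adjoint A).comp
            (A.comp (T.subtypeL.comp (T.orthogonalProjection)))))‖ ≤ δ := by
  change ‖T.isometryDefect A‖ ≤ δ
  refine (T.isSymmetric_isometryDefect A).opNorm_le_of_abs_re_inner_le hδ0 fun x => ?_
  rw [T.re_inner_isometryDefect_apply_self]
  set y := T.starProjection x
  obtain ⟨hlower, hupper⟩ := hiso y (T.starProjection_apply_mem x)
  have hy : ‖y‖ ^ 2 ≤ ‖x‖ ^ 2 := by gcongr; exact T.norm_starProjection_apply_le x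
  calc |‖y‖ ^ 2 - ‖A y‖ ^ 2| ≤ δ * ‖y‖ ^ 2 := abs_sub_le_iff.mpr ⟨by linarith, by linarith⟩
    _ ≤ δ * ‖x‖ ^ 2 := by gcongr

/-- If a linear map `A` on a finite-dimensional complex inner-product space satisfies the
`δ`-local isometry property on a subspace `T`, then `‖P_T − P_T A* A P_T‖ ≤ δ`. -/
theorem local_isometry_operator_bound
    {M F : Type*} [NormedAddCommGroup M] [InnerProductSpace ℂ M] [FiniteDimensional ℂ M]
    [NormedAddCommGroup F] [InnerProductSpace ℂ F] [FiniteDimensional ℂ F]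
    (A : M →L[ℂ] F) (T : Submodule ℂ M) (δ : ℝ) (hδ0 : 0 ≤ δ) (hδ1 : δ < 1)
    (hiso : ∀ X ∈ T, (1 - δ) * ‖X‖ ^ 2 ≤ ‖A X‖ ^ 2 ∧ ‖A X‖ ^ 2 ≤ (1 + δ) * ‖X‖ ^ 2) :
    ‖(T.subtypeL.comp (T.orthogonalProjection)) -
        ((T.subtypeL.comp (T.orthogonalProjection)).comp
          ((ContinuousLinearMap.adjoint A).comp
            (A.comp (T.subtypeL.comp (T.orthogonalProjection)))))‖ ≤ δ :=
  local_isometry_operator_bound_general A T δ hδ0 hiso
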